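/- arXiv:1808.05934 — 6 statements merged into one kernel-verified Lean document; each statement's English description precedes it below -/
import Mathlib

section
/- A random substitution ϑ has disjoint images if and only if ϑ^k has disjoint images for all k ≥ 1. -/
open List

variable {A : Type*}

/-- Extension of a random substitution to words, by concatenation. -/
def substWord (θ : A → Set (List A)) : List A → Set (List A)
  | [] => {[]}
  | a :: u => {w | ∃ x ∈ θ a, ∃ y ∈ substWord θ u, w = x ++ y}

/-- The set of realisations of `θ^k` on a word. -/
def substPowWord (θ : A → Set (List A)) : ℕ → List A → Set (List A)
  | 0, u => {u}
  | (k+1), u => ⋃ v ∈ substPowWord θ k u, substWord θ v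

/-- The power `θ^k` as a random substitution. -/
def powSub (θ : A → Set (List A)) (k : ℕ) : A → Set (List A) :=
  fun a => substPowWord θ k [a]

/-- `θ` is a (finite range) random substitution: every letter has a nonempty
finite set of realisations, all of which are nonempty words. -/
def RandomSubstitution (θ : A → Set (List A)) : Prop :=
  ∀ a : A, (θ a).Nonempty ∧ (θ a).Finite ∧ ∀ w ∈ θ a, w ≠ []

/-- A word is `θ`-legal if it is a subword of a realisation of some power of
`θ` on some letter. -/
def IsLegal (θ : A → Set (List A)) (u : List A) : Prop :=
  ∃ k : ℕ, ∃ a : A, ∃ w ∈ substPowWord θ k [a], u <:+: w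

/-- `θ` has disjoint images. -/
def HasDisjointImages (θ : A → Set (List A)) : Prop :=
  ∀ u v : List A, IsLegal θ u → IsLegal θ v →
    (substWord θ u ∩ substWord θ v).Nonempty → u = v

/-- `θ` has constant length `ℓ`. -/
def ConstantLength (θ : A → Set (List A)) (ℓ : ℕ) : Prop :=
  ∀ a : A, ∀ w ∈ θ a, w.length = ℓ

/-- `θ` is compatible: abelianisations of realisations are well defined. -/
def Compatible [DecidableEq A] (θ : A → Set (List A)) : Prop :=
  ∀ a : A, ∀ u ∈ θ a, ∀ v ∈ θ a, ∀ b : A, u.count b = v.count b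

/-- `θ` is primitive. -/
def Primitive (θ : A → Set (List A)) : Prop :=
  ∃ k : ℕ, ∀ a b : A, ∃ w ∈ substPowWord θ k [a], b ∈ w

/-- The finite subword of a bi-infinite sequence starting at `i`, of length `n`. -/
def extract (x : ℤ → A) (i : ℤ) (n : ℕ) : List A :=
  (List.range n).map fun j => x (i + j)

/-- The RS-subshift of `θ`: bi-infinite sequences all of whose subwords are legal. -/
def Subshift (θ : A → Set (List A)) : Set (ℤ → A) :=
  {x | ∀ i : ℤ, ∀ n : ℕ, IsLegal θ (extract x i n)}

/-- `x` is a realisation-wise image of `y` under `θ`: there is a decomposition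
of `x` into consecutive inflation words, with a cut at the origin, the `n`-th
of which is a realisation of `θ` on `y n`. -/
def SeqImage (θ : A → Set (List A)) (y x : ℤ → A) : Prop :=
  ∃ c : ℤ → ℤ, c 0 = 0 ∧ (∀ n : ℤ, c n < c (n + 1)) ∧
    ∀ n : ℤ, extract x (c n) (c (n + 1) - c n).toNat ∈ θ (y n)

/-- `θ` is globally uniquely recognisable. -/
def GloballyUniquelyRecognisable (θ : A → Set (List A)) : Prop :=
  ∀ x ∈ Subshift θ, ∃! y : ℤ → A, y ∈ Subshift θ ∧
    ∃ k : ℕ, (∃ w ∈ θ (y 0), k < w.length) ∧ SeqImage θ y (fun n => x (n - k))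

/-- `x` has period `p` (as a natural number, acting on indices in `ℤ`). -/
def HasPeriod (x : ℤ → A) (p : ℕ) : Prop :=
  ∀ n : ℤ, x (n + p) = x n

/-- `x` is shift-periodic. -/
def IsPeriodic (x : ℤ → A) : Prop :=
  ∃ p : ℕ, 0 < p ∧ HasPeriod x p

/-- `p` is the prime (least) period of `x`. -/
def PrimePeriod (x : ℤ → A) (p : ℕ) : Prop :=
  0 < p ∧ HasPeriod x p ∧ ∀ q : ℕ, 0 < q → HasPeriod x q → p ≤ q

/-- `u` is a periodic block for `x`: up to shift, `x` is the bi-infinite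
repetition of `u`. -/
def PeriodicBlock (u : List A) (x : ℤ → A) : Prop :=
  u ≠ [] ∧ ∃ i : ℤ, ∀ n : ℤ, extract x (i + n * u.length) u.length = u

section Aux

variable {θ : A → Set (List A)}

lemma substWord_append (s t : List A) :
    substWord θ (s ++ t) =
      {w | ∃ x ∈ substWord θ s, ∃ y ∈ substWord θ t, w = x ++ y} := by
  induction s with
  | nil =>
    ext w
    simp [substWord]
  | cons a s ih =>
    ext w
    simp only [List.cons_append, substWord, List.append_eq, Set.mem_setOf_eq, ih]
    constructor
    · rintro ⟨x, hx, y, ⟨p, hp, q, hq, rfl⟩, rfl⟩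
      exact ⟨x ++ p, ⟨x, hx, p, hp, rfl⟩, q, hq, (List.append_assoc _ _ _).symm⟩
    · rintro ⟨xp, ⟨x, hx, p, hp, rfl⟩, q, hq, rfl⟩
      exact ⟨x, hx, p ++ q, ⟨p, hp, q, hq, rfl⟩, List.append_assoc _ _ _⟩

lemma substPowWord_nil (k : ℕ) : substPowWord θ k ([] : List A) = {[]} := by
  induction k with
  | zero => rfl
  | succ k ih =>
    simp [substPowWord, ih, substWord]

lemma substPowWord_append (k : ℕ) (s t : List A) :
    substPowWord θ k (s ++ t) =
      {w | ∃ x ∈ substPowWord θ k s, ∃ y ∈ substPowWord θ k t, w = x ++ y} := by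
  induction k with
  | zero =>
    ext w
    simp [substPowWord]
  | succ k ih =>
    ext w
    simp only [substPowWord, Set.mem_iUnion, ih, Set.mem_setOf_eq, exists_prop]
    constructor
    · rintro ⟨v, ⟨x, hx, y, hy, rfl⟩, hw⟩
      rw [substWord_append] at hw
      obtain ⟨p, hp, q, hq, rfl⟩ := hw
      exact ⟨p, ⟨x, hx, hp⟩, q, ⟨y, hy, hq⟩, rfl⟩
    · rintro ⟨p, ⟨x, hx, hp⟩, q, ⟨y, hy, hq⟩, rfl⟩
      refine ⟨x ++ y, ⟨x, hx, y, hy, rfl⟩, ?_⟩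
      rw [substWord_append]
      exact ⟨p, hp, q, hq, rfl⟩

lemma substPowWord_add (m k : ℕ) (u : List A) :
    substPowWord θ (m + k) u = ⋃ v ∈ substPowWord θ m u, substPowWord θ k v := by
  induction k with
  | zero =>
    ext w
    simp [substPowWord]
  | succ k ih =>
    show substPowWord θ ((m + k) + 1) u = _
    ext w
    simp only [substPowWord, ih, Set.mem_iUnion, exists_prop]
    constructor
    · rintro ⟨v, ⟨v', hv', hv⟩, hw⟩
      exact ⟨v', hv', ⟨v, hv, hw⟩⟩
    · rintro ⟨v', hv', v, hv, hw⟩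
      exact ⟨v, ⟨v', hv', hv⟩, hw⟩

lemma substWord_nonempty (hθ : RandomSubstitution θ) (u : List A) :
    (substWord θ u).Nonempty := by
  induction u with
  | nil => exact ⟨[], rfl⟩
  | cons a u ih =>
    obtain ⟨x, hx⟩ := (hθ a).1
    obtain ⟨y, hy⟩ := ih
    exact ⟨x ++ y, x, hx, y, hy, rfl⟩

lemma substPowWord_nonempty (hθ : RandomSubstitution θ) (k : ℕ) (u : List A) :
    (substPowWord θ k u).Nonempty := by
  induction k with
  | zero => exact ⟨u, rfl⟩
  | succ k ih =>
    obtain ⟨v, hv⟩ := ih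
    obtain ⟨w, hw⟩ := substWord_nonempty hθ v
    exact ⟨w, Set.mem_biUnion hv hw⟩

lemma substPowWord_infix (hθ : RandomSubstitution θ) {k : ℕ} {u w u' : List A}
    (huw : u <:+: w) (hu' : u' ∈ substPowWord θ k u) :
    ∃ w' ∈ substPowWord θ k w, u' <:+: w' := by
  obtain ⟨s, t, rfl⟩ := huw
  obtain ⟨x, hx⟩ := substPowWord_nonempty hθ k s
  obtain ⟨y, hy⟩ := substPowWord_nonempty hθ k t
  refine ⟨x ++ u' ++ y, ?_, ⟨x, y, rfl⟩⟩
  rw [substPowWord_append]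
  refine ⟨x ++ u', ?_, y, hy, rfl⟩
  rw [substPowWord_append]
  exact ⟨x, hx, u', hu', rfl⟩

lemma isLegal_substPowWord (hθ : RandomSubstitution θ) {k : ℕ} {u u' : List A}
    (hu : IsLegal θ u) (hu' : u' ∈ substPowWord θ k u) : IsLegal θ u' := by
  obtain ⟨m, a, w, hw, huw⟩ := hu
  obtain ⟨w', hw', hu'w'⟩ := substPowWord_infix hθ huw hu'
  refine ⟨m + k, a, w', ?_, hu'w'⟩
  rw [substPowWord_add]
  exact Set.mem_biUnion hw hw'

lemma substWord_powSub (k : ℕ) (u : List A) :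
    substWord (powSub θ k) u = substPowWord θ k u := by
  induction u with
  | nil => exact (substPowWord_nil k).symm
  | cons a u ih =>
    ext w
    show (∃ x ∈ substPowWord θ k [a], ∃ y ∈ substWord (powSub θ k) u, w = x ++ y) ↔ _
    rw [ih]
    have : (a :: u) = [a] ++ u := rfl
    rw [this, substPowWord_append]
    rfl

lemma substPowWord_powSub (k m : ℕ) (u : List A) :
    substPowWord (powSub θ k) m u = substPowWord θ (k * m) u := by
  induction m with
  | zero => rfl
  | succ m ih =>
    show (⋃ v ∈ substPowWord (powSub θ k) m u, substWord (powSub θ k) v) = _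
    rw [Nat.mul_succ, substPowWord_add]
    ext w
    simp only [Set.mem_iUnion, exists_prop, ih, substWord_powSub]

lemma isLegal_of_powSub {k : ℕ} {u : List A}
    (h : IsLegal (powSub θ k) u) : IsLegal θ u := by
  obtain ⟨m, a, w, hw, huw⟩ := h
  rw [substPowWord_powSub] at hw
  exact ⟨k * m, a, w, hw, huw⟩

lemma substPowWord_one (u : List A) : substPowWord θ 1 u = substWord θ u := by
  show (⋃ v ∈ ({u} : Set (List A)), substWord θ v) = _
  simp

lemma powSub_one : powSub θ 1 = θ := by
  funext a
  show substPowWord θ 1 [a] = θ a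
  rw [substPowWord_one]
  ext w
  show (∃ x ∈ θ a, ∃ y ∈ ({[]} : Set (List A)), w = x ++ y) ↔ w ∈ θ a
  constructor
  · rintro ⟨x, hx, y, hy, rfl⟩
    simp only [Set.mem_singleton_iff] at hy
    subst hy
    simpa using hx
  · intro hw
    exact ⟨w, hw, [], rfl, (List.append_nil w).symm⟩

lemma disjoint_pow (hθ : RandomSubstitution θ) (h : HasDisjointImages θ) :
    ∀ k : ℕ, ∀ u v : List A, IsLegal θ u → IsLegal θ v →
      (substPowWord θ (k + 1) u ∩ substPowWord θ (k + 1) v).Nonempty → u = v := by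
  intro k
  induction k with
  | zero =>
    intro u v hu hv hne
    rw [substPowWord_one, substPowWord_one] at hne
    exact h u v hu hv hne
  | succ k ih =>
    intro u v hu hv ⟨w, hwu, hwv⟩
    obtain ⟨u', hu', hwu'⟩ := Set.mem_iUnion₂.mp hwu
    obtain ⟨v', hv', hwv'⟩ := Set.mem_iUnion₂.mp hwv
    have hlu' : IsLegal θ u' := isLegal_substPowWord hθ hu hu'
    have hlv' : IsLegal θ v' := isLegal_substPowWord hθ hv hv'
    have : u' = v' := h u' v' hlu' hlv' ⟨w, hwu', hwv'⟩
    subst this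
    exact ih u v hu hv ⟨u', hu', hv'⟩

end Aux

/-- `θ` has disjoint images iff `θ^k` has disjoint images for all `k ≥ 1`. -/
theorem disjointImages_iff_pow (θ : A → Set (List A)) (hθ : RandomSubstitution θ) :
    HasDisjointImages θ ↔ ∀ k : ℕ, 1 ≤ k → HasDisjointImages (powSub θ k) := by
  constructor
  · intro h k hk u v hu hv hne
    obtain ⟨k, rfl⟩ := Nat.exists_eq_add_of_le hk
    rw [substWord_powSub, substWord_powSub] at hne
    rw [Nat.add_comm] at hne
    exact disjoint_pow hθ h k u v (isLegal_of_powSub hu) (isLegal_of_powSub hv) hne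
  · intro h
    have h1 := h 1 le_rfl
    rwa [powSub_one] at h1
end

section
/- Let ϑ be a random substitution such that all realisations on each letter have the same length (u, v ∈ ϑ(a) implies |u| = |v|). If ϑ does not have disjoint images, then there exist distinct letters a, b ∈ 𝒜 and words w_a ∈ ϑ(a), w_b ∈ ϑ(b) such that w_a is a prefix of w_b. -/
open List

variable {A : Type*}

theorem aux_not_disjoint (θ : A → Set (List A)) (hθ : RandomSubstitution θ)
    (hlen : ∀ a : A, ∀ u ∈ θ a, ∀ v ∈ θ a, u.length = v.length) :
    ∀ u v : List A, u ≠ v → (substWord θ u ∩ substWord θ v).Nonempty →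
      ∃ a b : A, a ≠ b ∧ ∃ wa ∈ θ a, ∃ wb ∈ θ b, wa <+: wb := by
  intro u
  induction u with
  | nil =>
    intro v huv ⟨w, hw1, hw2⟩
    simp only [substWord, Set.mem_singleton_iff] at hw1
    subst hw1
    cases v with
    | nil => exact absurd rfl huv
    | cons b v =>
      simp only [substWord, Set.mem_setOf_eq] at hw2
      obtain ⟨x, hx, y, hy, hxy⟩ := hw2
      exact absurd (List.append_eq_nil_iff.mp hxy.symm).1 ((hθ b).2.2 x hx)
  | cons a u ih =>
    intro v huv ⟨w, hw1, hw2⟩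
    cases v with
    | nil =>
      simp only [substWord, Set.mem_singleton_iff] at hw2
      subst hw2
      simp only [substWord, Set.mem_setOf_eq] at hw1
      obtain ⟨x, hx, y, hy, hxy⟩ := hw1
      exact absurd (List.append_eq_nil_iff.mp hxy.symm).1 ((hθ a).2.2 x hx)
    | cons b v =>
      simp only [substWord, Set.mem_setOf_eq] at hw1 hw2
      obtain ⟨x, hx, y, hy, hxy⟩ := hw1
      obtain ⟨x', hx', y', hy', hxy'⟩ := hw2
      have hpx : x <+: w := hxy ▸ ⟨y, rfl⟩
      have hpx' : x' <+: w := hxy' ▸ ⟨y', rfl⟩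
      by_cases hab : a = b
      · subst hab
        have hl : x.length = x'.length := hlen a x hx x' hx'
        have hxx' : x = x' := by
          rcases List.prefix_or_prefix_of_prefix hpx hpx' with h | h
          · exact h.eq_of_length hl
          · exact (h.eq_of_length hl.symm).symm
        subst hxx'
        have hyy' : y = y' := by
          have := hxy ▸ hxy'
          exact (List.append_cancel_left this.symm).symm
        subst hyy'
        exact ih v (fun h => huv (by rw [h])) ⟨y, hy, hy'⟩
      · rcases List.prefix_or_prefix_of_prefix hpx hpx' with h | h
        · exact ⟨a, b, hab, x, hx, x', hx', h⟩
        · exact ⟨b, a, fun h' => hab h'.symm, x', hx', x, hx, h⟩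

/-- if all realisations on each letter have the same length and `θ`
does not have disjoint images, then some inflation word of one letter is a prefix
of an inflation word of a different letter. -/
theorem not_disjointImages_prefix (θ : A → Set (List A)) (hθ : RandomSubstitution θ)
    (hlen : ∀ a : A, ∀ u ∈ θ a, ∀ v ∈ θ a, u.length = v.length)
    (hnd : ¬ HasDisjointImages θ) :
    ∃ a b : A, a ≠ b ∧ ∃ wa ∈ θ a, ∃ wb ∈ θ b, wa <+: wb := by
  simp only [HasDisjointImages, not_forall] at hnd
  obtain ⟨u, v, _, _, hne, huv⟩ := hnd
  exact aux_not_disjoint θ hθ hlen u v huv hne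
end

section
/- The compatible random substitution ϑ: 0 ↦ {0102, 1200, 0012}, 1 ↦ {010}, 2 ↦ {20102010} does not have disjoint images; specifically, 01020102010 ∈ ϑ(12) ∩ ϑ(001), and both 12 and 001 are ϑ-legal. -/
open List

variable {A : Type*}

/-- The substitution `0 ↦ {0102, 1200, 0012}, 1 ↦ {010}, 2 ↦ {20102010}`. -/
def θ5 : Fin 3 → Set (List (Fin 3)) :=
  fun x =>
    if x = 0 then {[0,1,0,2], [1,2,0,0], [0,0,1,2]}
    else if x = 1 then {[0,1,0]}
    else {[2,0,1,0,2,0,1,0]}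

/-- `θ5` does not have disjoint images; specifically
`01020102010 ∈ θ5(12) ∩ θ5(001)` and both `12` and `001` are legal. -/
theorem θ5_not_disjointImages :
    ([0,1,0,2,0,1,0,2,0,1,0] : List (Fin 3)) ∈ substWord θ5 [1,2] ∩ substWord θ5 [0,0,1] ∧
    IsLegal θ5 [1,2] ∧ IsLegal θ5 [0,0,1] ∧ ¬ HasDisjointImages θ5 := by
  have hmem : ([0,1,0,2,0,1,0,2,0,1,0] : List (Fin 3)) ∈
      substWord θ5 [1,2] ∩ substWord θ5 [0,0,1] := by
    constructor
    · exact ⟨[0,1,0], by simp [θ5], [2,0,1,0,2,0,1,0],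
        ⟨[2,0,1,0,2,0,1,0], by simp [θ5], [], rfl, by simp⟩, rfl⟩
    · exact ⟨[0,1,0,2], by simp [θ5], [0,1,0,2,0,1,0],
        ⟨[0,1,0,2], by simp [θ5], [0,1,0],
          ⟨[0,1,0], by simp [θ5], [], rfl, by simp⟩, rfl⟩, rfl⟩
  have hw : [0,0,1,2] ∈ substPowWord θ5 1 [(0 : Fin 3)] := by
    simp only [substPowWord, Set.mem_iUnion]
    exact ⟨[0], rfl, [0,0,1,2], by simp [θ5], [], rfl, by simp⟩
  have h12 : IsLegal θ5 [1,2] :=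
    ⟨1, 0, [0,0,1,2], hw, ⟨[0,0], [], by simp⟩⟩
  have h001 : IsLegal θ5 [0,0,1] :=
    ⟨1, 0, [0,0,1,2], hw, ⟨[], [2], by simp⟩⟩
  refine ⟨hmem, h12, h001, fun h => ?_⟩
  have := h [1,2] [0,0,1] h12 h001 ⟨_, hmem⟩
  simp at this
end

section
/- The compatible random substitution ϑ: 0 ↦ {010, 100}, 1 ↦ {0101} on the alphabet {0,1} has disjoint images. -/
open List

variable {A : Type*}

/-- The substitution `0 ↦ {010, 100}, 1 ↦ {0101}`. -/
def θ6 : Fin 2 → Set (List (Fin 2)) :=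
  fun x => if x = 0 then {[0,1,0], [1,0,0]} else {[0,1,0,1]}

lemma subst_nil' {w : List (Fin 2)} (h : w ∈ substWord θ6 []) : w = [] := h

lemma theta6_mem {a : Fin 2} {x : List (Fin 2)} (hx : x ∈ θ6 a) :
    (a = 0 ∧ (x = [0,1,0] ∨ x = [1,0,0])) ∨ (a = 1 ∧ x = [0,1,0,1]) := by
  fin_cases a <;> simp_all [θ6]

lemma head2 (u w : List (Fin 2)) (h : w ∈ substWord θ6 u) :
    w = [] ∨ (∃ t, w = 0::1::t) ∨ (∃ t, w = 1::0::t) := by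
  cases u with
  | nil => exact Or.inl h
  | cons a u' =>
    obtain ⟨x, hx, y, hy, rfl⟩ := h
    rcases theta6_mem hx with ⟨_, hx'|hx'⟩ | ⟨_, hx'⟩ <;> subst hx'
    · exact Or.inr (Or.inl ⟨0::y, rfl⟩)
    · exact Or.inr (Or.inr ⟨0::y, rfl⟩)
    · exact Or.inr (Or.inl ⟨0::1::y, rfl⟩)

lemma no00 (v y' : List (Fin 2)) (h : y' ∈ substWord θ6 v) (t : List (Fin 2)) :
    y' ≠ 0::0::t := by
  rcases head2 v y' h with h1 | ⟨s, h1⟩ | ⟨s, h1⟩ <;> subst h1 <;> simp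

lemma tail_after_one (u y' : List (Fin 2)) (h : (1::y') ∈ substWord θ6 u) :
    ∃ t, y' = 0::0::t := by
  cases u with
  | nil => exact (List.cons_ne_nil _ _ (subst_nil' h)).elim
  | cons c u'' =>
    obtain ⟨x2, hx2, y2, hy2, h2⟩ := h
    rcases theta6_mem hx2 with ⟨_, h3|h3⟩ | ⟨_, h3⟩ <;> subst h3 <;> simp at h2
    exact ⟨y2, h2⟩

lemma mixed_contra (u v y y' : List (Fin 2)) (hy : y ∈ substWord θ6 u)
    (hy' : y' ∈ substWord θ6 v) (h : y = 1 :: y') : False := by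
  subst h
  obtain ⟨t, ht⟩ := tail_after_one u y' hy
  exact no00 v y' hy' t ht

lemma subst_inj : ∀ (u v w : List (Fin 2)),
    w ∈ substWord θ6 u → w ∈ substWord θ6 v → u = v := by
  intro u
  induction u with
  | nil =>
    intro v w hu hv
    cases v with
    | nil => rfl
    | cons b v' =>
      obtain ⟨x, hx, y, hy, rfl⟩ := hv
      have h0 := subst_nil' hu
      rcases theta6_mem hx with ⟨_, hx'|hx'⟩ | ⟨_, hx'⟩ <;> subst hx' <;> simp at h0
  | cons a u' ih =>
    intro v w hu hv
    cases v with
    | nil =>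
      obtain ⟨x, hx, y, hy, rfl⟩ := hu
      have h0 := subst_nil' hv
      rcases theta6_mem hx with ⟨_, hx'|hx'⟩ | ⟨_, hx'⟩ <;> subst hx' <;> simp at h0
    | cons b v' =>
      obtain ⟨x, hx, y, hy, rfl⟩ := hu
      obtain ⟨x', hx', y', hy', h⟩ := hv
      rcases theta6_mem hx with ⟨ha, h1|h1⟩ | ⟨ha, h1⟩ <;>
        rcases theta6_mem hx' with ⟨hb, h2|h2⟩ | ⟨hb, h2⟩ <;>
          subst h1 <;> subst h2 <;> subst ha <;> subst hb <;> simp at h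
      · subst h; rw [ih v' y hy hy']
      · exact absurd (mixed_contra u' v' y y' hy hy' (by simp [h])) (fun f => f.elim)
      · subst h; rw [ih v' y hy hy']
      · exact absurd (mixed_contra v' u' y' y hy' hy (by simp [h])) (fun f => f.elim)
      · subst h; rw [ih v' y hy hy']

/-- `θ6` has disjoint images. -/
theorem θ6_disjointImages : HasDisjointImages θ6 := by
  rintro u v _ _ ⟨w, hw1, hw2⟩
  exact subst_inj u v w hw1 hw2
end

section
/- Let ϑ be a primitive compatible random substitution on an alphabet with at least two letters. If ϑ is globally uniquely recognisable, then the RS-subshift X_ϑ contains no shift-periodic points. -/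
open List

variable {A : Type*}

/-!
Let `p` be the least period of a periodic point of `X_θ`, `x` a point with period `p` and `y` its
preimage, cut into inflation words by `c` with offset `k`. Since `σ^p x = x`, recognisability
identifies the preimages obtained by cutting `x` at a position `J` and at `J + p`: if the blocks
containing `J` and `J + p` differ, their indices differ by a period of `y`, hence by exactly `p`,
and the intermediate blocks have length `1`. Applied at the two positions just before and at the
cut `c 1`, this makes `y` `p`-periodic and, for `p ≥ 2`, forces a block of `y p = y 0` of length
`1`; by compatibility then `c 1 = 1` and `k = 0`. For `p = 1` the point `x` is constant. Either
way some realisation of `θ (y 0)` is a power of `x 0`, and iterating, some realisation of `θ^K` on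
a letter is a power of a single letter. By compatibility all realisations of `θ^K` on that letter
are permutations of each other, which contradicts primitivity on an alphabet with two letters.
-/

def shift (x : ℤ → A) (m : ℤ) : ℤ → A := fun n => x (n + m)

section Sequences

variable {θ : A → Set (List A)} {x y : ℤ → A}

@[simp]
lemma extract_length (x : ℤ → A) (i : ℤ) (n : ℕ) : (extract x i n).length = n := by
  simp [_root_.extract]

lemma extract_shift (x : ℤ → A) (m i : ℤ) (n : ℕ) :
    extract (shift x m) i n = extract x (i + m) n := by
  simp only [_root_.extract, shift, add_right_comm]

lemma extract_one (x : ℤ → A) (i : ℤ) : extract x i 1 = [x i] := by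
  simp [_root_.extract]

lemma extract_eq_replicate {a : A} (hx : ∀ n, x n = a) (i : ℤ) (n : ℕ) :
    extract x i n = replicate n a := by
  simp [_root_.extract, hx]

lemma shift_mem_subshift (hx : x ∈ Subshift θ) (m : ℤ) : shift x m ∈ Subshift θ :=
  fun i n => by rw [extract_shift]; exact hx (i + m) n

lemma HasPeriod.shift_add {p : ℕ} (h : HasPeriod x p) (J : ℤ) : shift x (J + p) = shift x J :=
  funext fun n => by simp only [shift, ← add_assoc]; exact h _

lemma hasPeriod_of_shift_eq {m : ℤ} {d : ℕ} (h : shift y (m + d) = shift y m) : HasPeriod y d :=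
  fun n => by
    have := congrFun h (n - m)
    simp only [shift, sub_add_cancel] at this
    rwa [show n - m + (m + d) = n + d by ring] at this

lemma HasPeriod.eq_zero_of_one (h : HasPeriod x 1) (n : ℤ) : x n = x 0 := by
  have hper : Function.Periodic x 1 := fun n => by simpa using h n
  simpa using hper.int_mul_eq n

end Sequences

lemma sub_le_sub_of_lt_succ {c : ℤ → ℤ} (hc : ∀ n, c n < c (n + 1)) {m n : ℤ} (hmn : m ≤ n) :
    n - m ≤ c n - c m := by
  induction n, hmn using Int.leInduction with
  | base => simp
  | succ n _ ih => have := hc n; omega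

lemma exists_apply_le_lt_apply_succ {c : ℤ → ℤ} (hc : ∀ n, c n < c (n + 1)) (v : ℤ) :
    ∃ m, c m ≤ v ∧ v < c (m + 1) := by
  obtain ⟨m, hm, hmax⟩ := Int.exists_greatest_of_bdd (P := fun m => c m ≤ v)
    ⟨max 0 (v - c 0), fun z hz => by
      rcases le_total 0 z with h | h
      · have := sub_le_sub_of_lt_succ hc h; omega
      · omega⟩
    ⟨min 0 (v - c 0), by have := sub_le_sub_of_lt_succ hc (min_le_left 0 (v - c 0)); omega⟩
  exact ⟨m, hm, not_le.1 fun h => by have := hmax _ h; omega⟩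

/-- `c` cuts `x` into consecutive words, the `n`-th of which, occupying `[c n, c (n + 1))`, is a
realisation of `θ (y n)`; `SeqImage θ y x` says that such a `c` exists. -/
structure IsCutting (θ : A → Set (List A)) (y x : ℤ → A) (c : ℤ → ℤ) : Prop where
  map_zero : c 0 = 0
  lt_succ : ∀ n, c n < c (n + 1)
  mem : ∀ n, extract x (c n) (c (n + 1) - c n).toNat ∈ θ (y n)

namespace IsCutting

variable {θ : A → Set (List A)} {x y : ℤ → A} {c : ℤ → ℤ}

lemma strictMono (h : IsCutting θ y x c) : StrictMono c :=
  strictMono_int_of_lt_succ h.lt_succ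

lemma reindex (h : IsCutting θ y x c) (m : ℤ) :
    IsCutting θ (_root_.shift y m) (_root_.shift x (c m)) (fun n => c (n + m) - c m) where
  map_zero := by simp
  lt_succ n := by have := h.lt_succ (n + m); rw [add_right_comm]; omega
  mem n := by
    rw [extract_shift, add_right_comm, sub_add_cancel, sub_sub_sub_cancel_right]
    exact h.mem (n + m)

end IsCutting

def IsPreimage (θ : A → Set (List A)) (x y : ℤ → A) : Prop :=
  y ∈ Subshift θ ∧ ∃ k : ℕ, (∃ w ∈ θ (y 0), k < w.length) ∧ SeqImage θ y (fun n => x (n - k))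

section Recognisability

variable {θ : A → Set (List A)} {x y : ℤ → A} {c : ℤ → ℤ} {k p : ℕ}

lemma GloballyUniquelyRecognisable.eq_of_isPreimage {y₁ y₂ : ℤ → A}
    (hrec : GloballyUniquelyRecognisable θ) (hx : x ∈ Subshift θ) (h₁ : IsPreimage θ x y₁)
    (h₂ : IsPreimage θ x y₂) : y₁ = y₂ :=
  (hrec x hx).unique h₁ h₂

lemma IsCutting.isPreimage_shift (h : IsCutting θ y (fun n => x (n - k)) c)
    (hy : y ∈ Subshift θ) {J m : ℤ} (hm : c m ≤ J + k) (hm' : J + k < c (m + 1)) :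
    IsPreimage θ (shift x J) (shift y m) := by
  refine ⟨shift_mem_subshift hy m, (J + k - c m).toNat, ⟨_, by simpa [shift] using h.mem m, ?_⟩,
    fun n => c (n + m) - c m, ?_⟩
  · simp only [extract_length]; omega
  · have hx : shift (fun n => x (n - k)) (c m) = fun n => shift x J (n - (J + k - c m).toNat) := by
      funext n; simp only [shift]; congr 1; omega
    obtain ⟨h0, hs, hmem⟩ := hx ▸ h.reindex m
    exact ⟨h0, hs, hmem⟩

lemma shift_eq_of_hasPeriod (hrec : GloballyUniquelyRecognisable θ) (hx : x ∈ Subshift θ)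
    (hper : HasPeriod x p) (hy : y ∈ Subshift θ) (h : IsCutting θ y (fun n => x (n - k)) c)
    {J m m' : ℤ} (hm : c m ≤ J + k) (hm' : J + k < c (m + 1))
    (hpm : c m' ≤ J + p + k) (hpm' : J + p + k < c (m' + 1)) :
    shift y m' = shift y m :=
  hrec.eq_of_isPreimage (shift_mem_subshift hx J)
    (hper.shift_add J ▸ h.isPreimage_shift hy hpm hpm') (h.isPreimage_shift hy hm hm')

/-- The blocks `m` of `J` and `m'` of `J + p` give the same preimage of `σ^J x = σ^(J + p) x`, so
`m' - m` is a period of `y`: at least `p` by minimality, and at most `p` as blocks are nonempty. -/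
lemma block_jump (hrec : GloballyUniquelyRecognisable θ) (hx : x ∈ Subshift θ)
    (hper : HasPeriod x p) (hmin : ∀ z ∈ Subshift θ, ∀ r, 0 < r → HasPeriod z r → p ≤ r)
    (hy : y ∈ Subshift θ) (h : IsCutting θ y (fun n => x (n - k)) c)
    {J m : ℤ} (hm : c m ≤ J + k) (hm' : J + k < c (m + 1)) (hcross : c (m + 1) ≤ J + k + p) :
    HasPeriod y p ∧ c (m + p) = J + k + p := by
  obtain ⟨m', hpm, hpm'⟩ := exists_apply_le_lt_apply_succ h.lt_succ (J + p + k)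
  have hlt : m < m' := by
    have := h.strictMono.lt_iff_lt.1 (show c (m + 1) < c (m' + 1) by omega)
    omega
  obtain ⟨d, rfl⟩ : ∃ d : ℕ, m' = m + d := ⟨(m' - m).toNat, by omega⟩
  have hyd : HasPeriod y d :=
    hasPeriod_of_shift_eq (shift_eq_of_hasPeriod hrec hx hper hy h hm hm' hpm hpm')
  have hpd : p ≤ d := hmin y hy d (by omega) hyd
  have hdp : d ≤ p := by
    have := sub_le_sub_of_lt_succ h.lt_succ (show m + 1 ≤ m + d by omega)
    omega
  obtain rfl : d = p := le_antisymm hdp hpd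
  refine ⟨hyd, ?_⟩
  have := sub_le_sub_of_lt_succ h.lt_succ (show m + 1 ≤ m + d by omega)
  omega

end Recognisability

section Compatible

variable [DecidableEq A] {θ : A → Set (List A)}

lemma Compatible.perm (hc : Compatible θ) {a : A} {u v : List A} (hu : u ∈ θ a) (hv : v ∈ θ a) :
    u ~ v :=
  perm_iff_count.2 (hc a u hu v hv)

lemma Compatible.perm_flatMap_of_mem_substWord (hc : Compatible θ) {w₀ : A → List A}
    (hw₀ : ∀ a, w₀ a ∈ θ a) {u w : List A} (hw : w ∈ substWord θ u) : w ~ u.flatMap w₀ := by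
  induction u generalizing w with
  | nil => rw [show w = [] from hw]; rfl
  | cons a u ih =>
    obtain ⟨v, hv, w', hw', rfl⟩ := hw
    exact (hc.perm hv (hw₀ a)).append (ih hw')

lemma Compatible.perm_of_mem_substPowWord (hc : Compatible θ) (hne : ∀ a, (θ a).Nonempty)
    {K : ℕ} {u w₁ w₂ : List A} (hw₁ : w₁ ∈ substPowWord θ K u) (hw₂ : w₂ ∈ substPowWord θ K u) :
    w₁ ~ w₂ := by
  choose w₀ hw₀ using hne
  induction K generalizing w₁ w₂ with
  | zero => rw [show w₁ = u from hw₁, show w₂ = u from hw₂]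
  | succ K ih =>
    simp only [substPowWord, Set.mem_iUnion] at hw₁ hw₂
    obtain ⟨v₁, hv₁, hw₁⟩ := hw₁
    obtain ⟨v₂, hv₂, hw₂⟩ := hw₂
    exact (hc.perm_flatMap_of_mem_substWord hw₀ hw₁).trans
      (((ih hv₁ hv₂).flatMap_right w₀).trans (hc.perm_flatMap_of_mem_substWord hw₀ hw₂).symm)

end Compatible

lemma replicate_mem_substWord {θ : A → Set (List A)} {a b : A} {s : ℕ}
    (h : replicate s a ∈ θ b) (N : ℕ) : replicate (N * s) a ∈ substWord θ (replicate N b) := by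
  induction N with
  | zero => simp [substWord]
  | succ N ih => exact ⟨_, h, _, ih, by rw [← replicate_add]; ring_nf⟩

section MinimalPeriod

variable [DecidableEq A] {θ : A → Set (List A)} {p : ℕ}

theorem exists_replicate_mem_of_minimal_period (hc : Compatible θ)
    (hrec : GloballyUniquelyRecognisable θ)
    (hmin : ∀ z ∈ Subshift θ, ∀ r, 0 < r → HasPeriod z r → p ≤ r) (hp : 0 < p)
    {x : ℤ → A} (hx : x ∈ Subshift θ) (hper : HasPeriod x p) :
    ∃ y ∈ Subshift θ, HasPeriod y p ∧ ∃ s, 0 < s ∧ replicate s (x 0) ∈ θ (y 0) := by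
  obtain ⟨y, ⟨hy, k, ⟨w, hw, hkw⟩, c, h0, hs, hmem⟩, -⟩ := hrec x hx
  have hcut : IsCutting θ y (fun n => x (n - k)) c := ⟨h0, hs, hmem⟩
  have hc1 : 0 < c 1 := by simpa [h0] using hs 0
  have hk : (k : ℤ) < c 1 := by
    have := (hc.perm hw (hcut.mem 0)).length_eq
    simp only [zero_add, h0, sub_zero, extract_length] at this
    omega
  obtain ⟨hyp, hcp⟩ := block_jump hrec hx hper hmin hy hcut (J := c 1 - 1 - k) (m := 0)
    (by omega) (by rw [zero_add]; omega) (by rw [zero_add]; omega)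
  rw [zero_add] at hcp
  refine ⟨y, hy, hyp, ?_⟩
  rcases Nat.lt_or_ge p 2 with hp1 | hp2
  · obtain rfl : p = 1 := by omega
    refine ⟨(c 1).toNat, by omega, ?_⟩
    simpa [h0, extract_eq_replicate (a := x 0) fun n => hper.eq_zero_of_one _] using hcut.mem 0
  · have hc2 := sub_le_sub_of_lt_succ hs (show (1 + 1 : ℤ) ≤ p by omega)
    -- now the block `p`, a realisation of `θ (y p) = θ (y 0)`, has length `1`
    obtain ⟨-, hcp1⟩ := block_jump hrec hx hper hmin hy hcut (J := c 1 - k) (m := 1)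
      (by omega) (by have := hs 1; omega) (by omega)
    have hlen := (hc.perm (hcut.mem 0) (hyp 0 ▸ hcut.mem (0 + p))).length_eq
    simp only [zero_add, h0, sub_zero, extract_length] at hlen
    rw [add_comm] at hcp1
    obtain rfl : k = 0 := by omega
    refine ⟨1, one_pos, ?_⟩
    simpa [h0, show c 1 = 1 by omega, extract_one] using hcut.mem 0

theorem exists_replicate_mem_substPowWord_of_minimal_period (hc : Compatible θ)
    (hrec : GloballyUniquelyRecognisable θ)
    (hmin : ∀ z ∈ Subshift θ, ∀ r, 0 < r → HasPeriod z r → p ≤ r) (hp : 0 < p) (K : ℕ) :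
    ∀ x ∈ Subshift θ, HasPeriod x p →
      ∃ b N, 0 < N ∧ replicate N (x 0) ∈ substPowWord θ K [b] := by
  induction K with
  | zero => exact fun x _ _ => ⟨x 0, 1, one_pos, rfl⟩
  | succ K ih =>
    intro x hx hper
    obtain ⟨y, hy, hyp, s, hs, hmem⟩ :=
      exists_replicate_mem_of_minimal_period hc hrec hmin hp hx hper
    obtain ⟨b, N, hN, hN'⟩ := ih y hy hyp
    exact ⟨b, N * s, Nat.mul_pos hN hs,
      Set.mem_biUnion hN' (replicate_mem_substWord hmem N)⟩

end MinimalPeriod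

/-- a primitive compatible globally uniquely recognisable random
substitution on at least two letters has no periodic points in its subshift. -/
theorem recognisable_no_periodic [DecidableEq A] [Nontrivial A]
    (θ : A → Set (List A)) (hθ : RandomSubstitution θ)
    (hc : Compatible θ) (hp : Primitive θ)
    (hrec : GloballyUniquelyRecognisable θ) :
    ∀ x ∈ Subshift θ, ¬ IsPeriodic x := by
  rintro x hx ⟨q, hq, hxq⟩
  classical
  have hex : ∃ r, 0 < r ∧ ∃ z ∈ Subshift θ, HasPeriod z r := ⟨q, hq, x, hx, hxq⟩
  obtain ⟨hpos, z, hz, hzper⟩ := Nat.find_spec hex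
  have hmin : ∀ y ∈ Subshift θ, ∀ r, 0 < r → HasPeriod y r → Nat.find hex ≤ r :=
    fun y hy r hr hyr => Nat.find_min' hex ⟨hr, y, hy, hyr⟩
  obtain ⟨K, hK⟩ := hp
  obtain ⟨b, N, -, hN⟩ :=
    exists_replicate_mem_substPowWord_of_minimal_period hc hrec hmin hpos K z hz hzper
  obtain ⟨a, ha⟩ := exists_ne (z 0)
  obtain ⟨w, hw, haw⟩ := hK b a
  have hperm := hc.perm_of_mem_substPowWord (fun a => (hθ a).1) hN hw
  exact ha (eq_of_mem_replicate (hperm.mem_iff.2 haw))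
end

section
/- The random Fibonacci substitution subshift contains no periodic points. -/
open List

variable {A : Type*}

inductive Letter : Type
  | a : Letter
  | b : Letter
  deriving DecidableEq

/-- The random Fibonacci substitution `a ↦ {ab, ba}, b ↦ {a}`. -/
def randFib : Letter → Set (List Letter) :=
  fun x => match x with
  | .a => {[Letter.a, Letter.b], [Letter.b, Letter.a]}
  | .b => {[Letter.a]}

/-!
Let `φ` be the golden ratio and `D v = |v|_a - φ |v|_b`, the linear form on letter counts that
vanishes on the Perron–Frobenius eigenvector `(φ, 1)` of the substitution matrix. Every
realisation `z` of `randFib` on a word `w` satisfies `φ D z = -D w`, so substitution contracts `D`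
by the factor `φ`. A subword of a realisation is the realisation of a subword up to at most two
letters at each end, hence induction on the power of the substitution bounds `|D|` by `4 φ³` on
all legal words. If `x` had period `p`, its subword `u` of length `p` would give legal words `u^m`
with `D (u^m) = m D u`, so `D u = 0`; as `φ` is irrational, `u` is empty and `p = 0`.
-/

open Real
open scoped goldenRatio

section Desubstitution

variable {θ : A → Set (List A)} {L : ℕ}

theorem exists_eq_substWord_append_of_prefix (hθ : ∀ a, ∀ x ∈ θ a, x.length ≤ L) :
    ∀ {w z v : List A}, z ∈ substWord θ w → v <+: z →
      ∃ w' z' p, w' <+: w ∧ z' ∈ substWord θ w' ∧ p.length ≤ L ∧ v = z' ++ p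
  | [], _, v, rfl, hv => ⟨[], [], [], prefix_rfl, rfl, by simp, by simpa using hv⟩
  | c :: u, _, v, ⟨x, hx, y, hy, rfl⟩, hv => by
    by_cases hlen : v.length ≤ x.length
    · exact ⟨[], [], v, nil_prefix, rfl, hlen.trans (hθ c x hx), rfl⟩
    · obtain ⟨v', rfl⟩ := prefix_of_prefix_length_le (prefix_append x y) hv (by omega)
      obtain ⟨w', z', p, hw', hz', hp, rfl⟩ :=
        exists_eq_substWord_append_of_prefix hθ hy ((prefix_append_right_inj x).mp hv)
      exact ⟨c :: w', x ++ z', p, cons_prefix_cons.mpr ⟨rfl, hw'⟩, ⟨x, hx, z', hz', rfl⟩, hp,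
        by simp⟩

theorem exists_eq_append_substWord_of_suffix (hθ : ∀ a, ∀ x ∈ θ a, x.length ≤ L) :
    ∀ {w z v : List A}, z ∈ substWord θ w → v <:+ z →
      ∃ w' z' s, w' <:+ w ∧ z' ∈ substWord θ w' ∧ s.length ≤ L ∧ v = s ++ z'
  | [], _, v, rfl, hv => ⟨[], [], [], suffix_rfl, rfl, by simp, by simpa using hv⟩
  | c :: u, _, v, ⟨x, hx, y, hy, rfl⟩, hv => by
    by_cases hlen : v.length ≤ y.length
    · obtain ⟨w', z', s, hw', hz', hs, rfl⟩ := exists_eq_append_substWord_of_suffix hθ hy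
        (suffix_of_suffix_length_le hv (suffix_append x y) hlen)
      exact ⟨w', z', s, hw'.trans (suffix_cons c u), hz', hs, rfl⟩
    · obtain ⟨s, rfl⟩ := suffix_of_suffix_length_le (suffix_append x y) hv (by omega)
      have hs : s <:+ x := suffix_append_self_iff.mp hv
      exact ⟨u, y, s, suffix_cons c u, hy, hs.length_le.trans (hθ c x hx), rfl⟩

theorem exists_eq_append_substWord_append_of_infix (hθ : ∀ a, ∀ x ∈ θ a, x.length ≤ L)
    {w z v : List A} (hz : z ∈ substWord θ w) (hv : v <:+: z) :
    ∃ w' z' s p, w' <:+: w ∧ z' ∈ substWord θ w' ∧ s.length ≤ L ∧ p.length ≤ L ∧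
      v = s ++ z' ++ p := by
  obtain ⟨t, hvt, htz⟩ := infix_iff_prefix_suffix.mp hv
  obtain ⟨w₁, z₁, s, hw₁, hz₁, hs, rfl⟩ := exists_eq_append_substWord_of_suffix hθ hz htz
  by_cases hlen : v.length ≤ s.length
  · exact ⟨[], [], v, [], nil_infix, rfl, hlen.trans hs, by simp, by simp⟩
  · obtain ⟨v', rfl⟩ := prefix_of_prefix_length_le (prefix_append s z₁) hvt (by omega)
    obtain ⟨w', z', p, hw', hz', hp, rfl⟩ :=
      exists_eq_substWord_append_of_prefix hθ hz₁ ((prefix_append_right_inj s).mp hvt)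
    exact ⟨w', z', s, p, hw'.isInfix.trans hw₁.isInfix, hz', hs, hp, by simp⟩

end Desubstitution

theorem length_le_two_of_mem_randFib {c : Letter} {x : List Letter} (hx : x ∈ randFib c) :
    x.length ≤ 2 := by
  cases c
  · rcases hx with rfl | rfl <;> simp
  · rw [hx]; simp

theorem count_a_add_count_b (v : List Letter) :
    v.count Letter.a + v.count Letter.b = v.length := by
  induction v with
  | nil => rfl
  | cons c v ih => cases c <;> simp <;> omega

theorem count_of_mem_substWord_randFib :
    ∀ {w z : List Letter}, z ∈ substWord randFib w →
      z.count Letter.a = w.length ∧ z.count Letter.b = w.count Letter.a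
  | [], _, rfl => by simp
  | c :: u, _, ⟨x, hx, y, hy, rfl⟩ => by
    obtain ⟨ha, hb⟩ := count_of_mem_substWord_randFib hy
    cases c
    · rcases hx with rfl | rfl <;> simp [ha, hb]
    · rw [hx]; simp [ha, hb]

noncomputable def fibDiscrepancy (v : List Letter) : ℝ :=
  v.count Letter.a - φ * v.count Letter.b

theorem fibDiscrepancy_append (u v : List Letter) :
    fibDiscrepancy (u ++ v) = fibDiscrepancy u + fibDiscrepancy v := by
  simp only [fibDiscrepancy, count_append]
  push_cast
  ring

theorem abs_fibDiscrepancy_le (v : List Letter) : |fibDiscrepancy v| ≤ φ * v.length := by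
  have hlen : (v.count Letter.a : ℝ) + v.count Letter.b = v.length := by
    exact_mod_cast count_a_add_count_b v
  have ha : (0 : ℝ) ≤ v.count Letter.a := Nat.cast_nonneg _
  have hb : (0 : ℝ) ≤ v.count Letter.b := Nat.cast_nonneg _
  rw [fibDiscrepancy, abs_le]
  constructor <;> nlinarith [one_lt_goldenRatio]

theorem goldenRatio_mul_fibDiscrepancy_of_mem_substWord {w z : List Letter}
    (hz : z ∈ substWord randFib w) : φ * fibDiscrepancy z = -fibDiscrepancy w := by
  obtain ⟨ha, hb⟩ := count_of_mem_substWord_randFib hz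
  have hlen : (w.count Letter.a : ℝ) + w.count Letter.b = w.length := by
    exact_mod_cast count_a_add_count_b w
  simp only [fibDiscrepancy, ha, hb]
  linear_combination φ * hlen.symm - (w.count Letter.a : ℝ) * goldenRatio_sq

theorem abs_fibDiscrepancy_le_of_infix_of_mem_substPowWord (k : ℕ) (c : Letter) :
    ∀ {w v : List Letter}, w ∈ substPowWord randFib k [c] → v <:+: w →
      |fibDiscrepancy v| ≤ 4 * φ ^ 3 := by
  induction k with
  | zero =>
    rintro w v rfl hv
    calc |fibDiscrepancy v| ≤ φ * v.length := abs_fibDiscrepancy_le v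
      _ ≤ φ * 1 := by gcongr; simpa using hv.length_le
      _ ≤ 4 * φ ^ 3 := by nlinarith [goldenRatio_sq, one_lt_goldenRatio]
  | succ k ih =>
    intro w v hw hv
    obtain ⟨w₀, hw₀, hw⟩ := Set.mem_iUnion₂.mp hw
    obtain ⟨w', z', s, p, hw', hz', hs, hp, rfl⟩ :=
      exists_eq_append_substWord_append_of_infix (fun _ _ => length_le_two_of_mem_randFib) hw hv
    have hs' : |fibDiscrepancy s| ≤ φ * 2 := by grw [abs_fibDiscrepancy_le, hs]; norm_num
    have hp' : |fibDiscrepancy p| ≤ φ * 2 := by grw [abs_fibDiscrepancy_le, hp]; norm_num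
    have hz'' : |fibDiscrepancy z'| ≤ 4 * φ ^ 2 := by
      have h := congrArg abs (goldenRatio_mul_fibDiscrepancy_of_mem_substWord hz')
      rw [abs_mul, abs_neg, abs_of_pos goldenRatio_pos] at h
      refine le_of_mul_le_mul_left ?_ goldenRatio_pos
      linear_combination h + ih hw₀ hw'
    calc |fibDiscrepancy (s ++ z' ++ p)|
        ≤ |fibDiscrepancy s| + |fibDiscrepancy z'| + |fibDiscrepancy p| := by
          simp only [fibDiscrepancy_append]; exact abs_add_three _ _ _
      _ ≤ φ * 2 + 4 * φ ^ 2 + φ * 2 := by gcongr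
      _ = 4 * φ ^ 3 := by linear_combination -4 * φ * goldenRatio_sq

theorem IsLegal.abs_fibDiscrepancy_le {v : List Letter} (hv : IsLegal randFib v) :
    |fibDiscrepancy v| ≤ 4 * φ ^ 3 := by
  obtain ⟨k, c, w, hw, hvw⟩ := hv
  exact abs_fibDiscrepancy_le_of_infix_of_mem_substPowWord k c hw hvw

theorem eq_nil_of_fibDiscrepancy_eq_zero {v : List Letter} (h : fibDiscrepancy v = 0) :
    v = [] := by
  rw [fibDiscrepancy, sub_eq_zero] at h
  have hb : v.count Letter.b = 0 := by
    by_contra hb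
    exact (goldenRatio_irrational.mul_natCast hb).ne_nat _ (by rw [h, mul_comm])
  have ha : v.count Letter.a = 0 := by exact_mod_cast (by simpa [hb] using h)
  rw [← length_eq_zero_iff, ← count_a_add_count_b, ha, hb]

theorem eq_zero_of_forall_abs_nsmul_le {G : Type*} [AddCommGroup G] [LinearOrder G]
    [IsOrderedAddMonoid G] [Archimedean G] {a C : G} (h : ∀ m : ℕ, |m • a| ≤ C) : a = 0 := by
  by_contra ha
  obtain ⟨m, hm⟩ := exists_lt_nsmul (abs_pos.mpr ha) C
  exact (h m).not_gt (by rwa [abs_nsmul])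

-- The coercion `List ℕ → List ℤ` in `extract` is elaborated through the list monad.
theorem extract_eq_map_range (x : ℤ → A) (i : ℤ) (n : ℕ) :
    extract x i n = (range n).map fun j : ℕ => x (i + j) := by
  simp [_root_.extract, ← map_eq_flatMap]

theorem extract_add (x : ℤ → A) (i : ℤ) (m n : ℕ) :
    extract x i (m + n) = extract x i m ++ extract x (i + m) n := by
  simp only [extract_eq_map_range, range_add, map_append, map_map]
  congr 1
  refine map_congr_left fun j _ => ?_
  simp only [Function.comp_apply, Nat.cast_add, add_assoc]

theorem HasPeriod.extract_add_period {x : ℤ → A} {p : ℕ} (hx : HasPeriod x p) (i : ℤ)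
    (n : ℕ) : extract x (i + p) n = extract x i n := by
  simp only [extract_eq_map_range]
  exact map_congr_left fun j _ => by rw [add_right_comm]; exact hx _

theorem HasPeriod.count_extract_mul [BEq A] {x : ℤ → A} {p : ℕ} (hx : HasPeriod x p)
    (i : ℤ) (c : A) (m : ℕ) :
    (extract x i (m * p)).count c = m * (extract x i p).count c := by
  induction m with
  | zero => simp [extract_eq_map_range]
  | succ m ih =>
    rw [Nat.succ_mul, add_comm, extract_add, count_append, hx.extract_add_period, ih]
    ring

theorem HasPeriod.fibDiscrepancy_extract_mul {x : ℤ → Letter} {p : ℕ} (hx : HasPeriod x p)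
    (i : ℤ) (m : ℕ) :
    fibDiscrepancy (extract x i (m * p)) = m * fibDiscrepancy (extract x i p) := by
  simp only [fibDiscrepancy, hx.count_extract_mul]
  push_cast
  ring

/-- the random Fibonacci subshift contains no periodic points. -/
theorem randFib_no_periodic : ∀ x ∈ Subshift randFib, ¬ IsPeriodic x := by
  rintro x hx ⟨p, hp, hper⟩
  have hbounded (m : ℕ) : |m • fibDiscrepancy (extract x 0 p)| ≤ 4 * φ ^ 3 := by
    rw [nsmul_eq_mul, ← hper.fibDiscrepancy_extract_mul]
    exact (hx 0 (m * p)).abs_fibDiscrepancy_le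
  have hnil := eq_nil_of_fibDiscrepancy_eq_zero (eq_zero_of_forall_abs_nsmul_le hbounded)
  exact hp.ne' (by simpa [extract_eq_map_range] using hnil)
end
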